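/- arXiv:2405.04001 — 8 statements merged into one kernel-verified Lean document; each statement's English description precedes it below -/
import Mathlib

section
/- Let (Y, d) be a length space, y₀ ∈ Y, L > 0, and let r be a real number with 0 < r < L and 2r < Diam(Y) (where Diam(Y) = sup_{x,y∈Y} d(x,y), possibly infinite). Then in the product metric space Y ×₂ ℝ, the set B((y₀,0), L) \ B((y₀,0), r) is path connected, where B(z, ρ) denotes the open metric ball of radius ρ centered at z. -/
/-!
A unit-speed geodesic `γ` from `y₀` makes `(u, t) ↦ (γ u, t)` an isometric copy of a Euclidean
half-plane through the centre `(y₀, 0)`, so circles about the centre in that half-plane are arcs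
of spheres of `Y ×₂ ℝ`. A point `(y, t)` at distance `ρ` from the centre is joined, along such an
arc over a geodesic from `y₀` to `y`, to `(y₀, ±ρ)`, and the vertical line `{y₀} × ℝ` joins that
to `(y₀, ±r)`. Since `Diam Y > 2r`, some geodesic from `y₀` is longer than `r`; over it, both
`(y₀, r)` and `(y₀, -r)` are joined along the sphere of radius `r` to one base point `(γ r, 0)`.
-/

/-- A metric space is a length space if every pair of points is joined by a
minimizing geodesic. -/
def IsLengthSpace (Y : Type*) [MetricSpace Y] : Prop :=
  ∀ x y : Y, ∃ γ : ℝ → Y, γ 0 = x ∧ γ (dist x y) = y ∧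
    ∀ s ∈ Set.Icc (0 : ℝ) (dist x y), ∀ t ∈ Set.Icc (0 : ℝ) (dist x y),
      dist (γ s) (γ t) = |s - t|

open Set Metric WithLp

lemma joinedIn_image_uIcc {X : Type*} [TopologicalSpace X] {f : ℝ → X} {a b : ℝ}
    (hf : ContinuousOn f (uIcc a b)) : JoinedIn (f '' uIcc a b) (f a) (f b) := by
  rw [← segment_eq_uIcc] at hf ⊢
  exact (JoinedIn.of_segment_subset subset_rfl).map_continuousOn hf

lemma mem_ball_diff_ball {X : Type*} [PseudoMetricSpace X] {p c : X} {r L : ℝ} :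
    p ∈ ball c L \ ball c r ↔ r ≤ dist p c ∧ dist p c < L := by
  rw [mem_sdiff, mem_ball, mem_ball, not_lt, and_comm]

lemma sphere_subset_ball_diff_ball {X : Type*} [PseudoMetricSpace X] (c : X) {r ρ L : ℝ}
    (hr : r ≤ ρ) (hL : ρ < L) : sphere c ρ ⊆ ball c L \ ball c r := fun p hp => by
  rw [mem_sphere] at hp
  exact mem_ball_diff_ball.2 ⟨hp ▸ hr, hp ▸ hL⟩

lemma exists_lt_dist_of_ofReal_two_mul_lt_ediam {X : Type*} [PseudoMetricSpace X] (x : X)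
    {r : ℝ} (h : ENNReal.ofReal (2 * r) < ediam (univ : Set X)) : ∃ y, r < dist x y := by
  by_contra! hr
  refine h.not_ge (ediam_le_of_forall_dist_le fun a _ b _ => ?_)
  calc dist a b ≤ dist x a + dist x b := dist_triangle_left a b x
    _ ≤ 2 * r := by linarith [hr a, hr b]

lemma IsLengthSpace.exists_geodesic {Y : Type*} [MetricSpace Y] (hY : IsLengthSpace Y) (x y : Y) :
    ∃ γ : ℝ → Y, γ (dist x y) = y ∧ ContinuousOn γ (Icc 0 (dist x y)) ∧
      ∀ u ∈ Icc 0 (dist x y), dist (γ u) x = u := by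
  obtain ⟨γ, hγ0, hγy, hγ⟩ := hY x y
  refine ⟨γ, hγy, ?_, fun u hu => ?_⟩
  · refine (LipschitzOnWith.of_dist_le_mul (K := 1) fun s hs t ht => ?_).continuousOn
    rw [hγ s hs t ht, NNReal.coe_one, one_mul, Real.dist_eq]
  · rw [← hγ0, hγ u hu 0 (left_mem_Icc.2 dist_nonneg), sub_zero, abs_of_nonneg hu.1]

section Product

variable {Y : Type*} [MetricSpace Y]

lemma dist_toLp_toLp_zero (y y₀ : Y) (t : ℝ) :
    dist (toLp 2 (y, t)) (toLp 2 (y₀, (0 : ℝ))) = √(dist y y₀ ^ 2 + t ^ 2) := by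
  rw [prod_dist_eq_add (by norm_num), Real.sqrt_eq_rpow]
  simp

lemma joinedIn_sphere_along_geodesic {y₀ : Y} {γ : ℝ → Y} {m t σ : ℝ} (hm : 0 ≤ m)
    (hσ : |σ| = 1) (hσt : σ * |t| = t) (hγ : ContinuousOn γ (Icc 0 m))
    (hdist : ∀ u ∈ Icc 0 m, dist (γ u) y₀ = u) :
    JoinedIn (sphere (toLp 2 (y₀, 0)) √(m ^ 2 + t ^ 2))
      (toLp 2 (y₀, σ * √(m ^ 2 + t ^ 2))) (toLp 2 (γ m, t)) := by
  set ρ := √(m ^ 2 + t ^ 2)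
  have hρ : ρ ^ 2 = m ^ 2 + t ^ 2 := Real.sq_sqrt (by positivity)
  have hρ0 : 0 ≤ ρ := Real.sqrt_nonneg _
  let f : ℝ → WithLp 2 (Y × ℝ) := fun u => toLp 2 (γ u, σ * √(ρ ^ 2 - u ^ 2))
  have hf : ContinuousOn f (uIcc 0 m) := by
    rw [uIcc_of_le hm]
    exact (prod_continuous_toLp 2 Y ℝ).comp_continuousOn (hγ.prodMk (by fun_prop))
  have hγ0 : γ 0 = y₀ := dist_eq_zero.1 (hdist 0 (left_mem_Icc.2 hm))
  have h0 : f 0 = toLp 2 (y₀, σ * ρ) := by simp [f, hγ0, Real.sqrt_sq hρ0]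
  have hm' : f m = toLp 2 (γ m, t) := by simp [f, hρ, Real.sqrt_sq_eq_abs, hσt]
  rw [← h0, ← hm']
  refine (joinedIn_image_uIcc hf).mono ?_
  rintro _ ⟨u, hu, rfl⟩
  rw [uIcc_of_le hm] at hu
  have hu2 : u ^ 2 ≤ ρ ^ 2 := by nlinarith [hu.1, hu.2]
  rw [mem_sphere, dist_toLp_toLp_zero, hdist u hu, mul_pow, ← sq_abs σ, hσ, one_pow, one_mul,
    Real.sq_sqrt (by linarith), add_sub_cancel, Real.sqrt_sq hρ0]

lemma joinedIn_ball_diff_ball_vertical (y₀ : Y) {r L a b σ : ℝ} (hr : 0 ≤ r) (hσ : |σ| = 1)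
    (ha : a ∈ Ico r L) (hb : b ∈ Ico r L) :
    JoinedIn (ball (toLp 2 (y₀, 0)) L \ ball (toLp 2 (y₀, 0)) r)
      (toLp 2 (y₀, σ * a)) (toLp 2 (y₀, σ * b)) := by
  let f : ℝ → WithLp 2 (Y × ℝ) := fun s => toLp 2 (y₀, σ * s)
  refine (joinedIn_image_uIcc (f := f) (by fun_prop)).mono ?_
  rintro _ ⟨s, hs, rfl⟩
  obtain ⟨hrs, hsL⟩ := ordConnected_Ico.uIcc_subset ha hb hs
  rw [mem_ball_diff_ball, dist_toLp_toLp_zero, dist_self, zero_pow two_ne_zero, zero_add,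
    Real.sqrt_sq_eq_abs, abs_mul, hσ, one_mul, abs_of_nonneg (hr.trans hrs)]
  exact ⟨hrs, hsL⟩

end Product

theorem ball_diff_ball_pathConnected_general (Y : Type*) [MetricSpace Y]
    (hY : IsLengthSpace Y) (y₀ : Y) (L r : ℝ) (hr : 0 < r)
    (hrL : r < L)
    (hdiam : ENNReal.ofReal (2 * r) < EMetric.diam (Set.univ : Set Y)) :
    IsPathConnected
      (Metric.ball ((WithLp.equiv 2 (Y × ℝ)).symm (y₀, 0)) L \
        Metric.ball ((WithLp.equiv 2 (Y × ℝ)).symm (y₀, 0)) r) := by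
  rw [WithLp.equiv_symm_apply]
  set A := ball (toLp 2 (y₀, (0 : ℝ))) L \ ball (toLp 2 (y₀, (0 : ℝ))) r
  obtain ⟨y₁, hy₁⟩ := exists_lt_dist_of_ofReal_two_mul_lt_ediam y₀ hdiam
  obtain ⟨γ₁, -, hγ₁, hγ₁dist⟩ := hY.exists_geodesic y₀ y₁
  have hr_sqrt : √(r ^ 2 + 0 ^ 2) = r := by simp [hr.le]
  have hbase : ∀ σ : ℝ, |σ| = 1 → JoinedIn A (toLp 2 (y₀, σ * r)) (toLp 2 (γ₁ r, 0)) := by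
    intro σ hσ
    have := joinedIn_sphere_along_geodesic hr.le hσ (t := 0) (by simp)
      (hγ₁.mono (Icc_subset_Icc_right hy₁.le)) fun u hu => hγ₁dist u ⟨hu.1, hu.2.trans hy₁.le⟩
    rw [hr_sqrt] at this
    exact this.mono (sphere_subset_ball_diff_ball _ le_rfl hrL)
  refine ⟨toLp 2 (γ₁ r, 0), (hbase 1 abs_one).target_mem, fun p hp => ?_⟩
  rcases p with ⟨y, t⟩
  obtain ⟨σ, hσ, hσt⟩ : ∃ σ : ℝ, |σ| = 1 ∧ σ * |t| = t := by
    rcases le_total 0 t with ht | ht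
    · exact ⟨1, abs_one, by rw [one_mul, abs_of_nonneg ht]⟩
    · exact ⟨-1, by simp, by rw [neg_one_mul, abs_of_nonpos ht, neg_neg]⟩
  obtain ⟨γ, hγy, hγ, hγdist⟩ := hY.exists_geodesic y₀ y
  have hρ := mem_ball_diff_ball.1 hp
  rw [dist_toLp_toLp_zero] at hρ
  have harc := joinedIn_sphere_along_geodesic dist_nonneg hσ hσt hγ hγdist
  rw [hγy, dist_comm] at harc
  have hvert := joinedIn_ball_diff_ball_vertical y₀ hr.le hσ ⟨le_rfl, hrL⟩ hρ
  exact ((hbase σ hσ).symm.trans hvert).trans (harc.mono (sphere_subset_ball_diff_ball _ hρ.1 hρ.2))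

theorem ball_diff_ball_pathConnected (Y : Type*) [MetricSpace Y]
    (hY : IsLengthSpace Y) (y₀ : Y) (L r : ℝ) (hL : 0 < L) (hr : 0 < r)
    (hrL : r < L)
    (hdiam : ENNReal.ofReal (2 * r) < EMetric.diam (Set.univ : Set Y)) :
    IsPathConnected
      (Metric.ball ((WithLp.equiv 2 (Y × ℝ)).symm (y₀, 0)) L \
        Metric.ball ((WithLp.equiv 2 (Y × ℝ)).symm (y₀, 0)) r) :=
  ball_diff_ball_pathConnected_general Y hY y₀ L r hr hrL hdiam
end

section
/- Let (Y, d) be a length space, y₀ ∈ Y, and let r, L be real numbers with 0 < r < L. Then in the product metric space Y ×₂ ℝ, the set X₊ = (B((y₀,0), L) \ B((y₀,0), r)) ∩ (Y × [0, ∞)) is path connected, where B(z, ρ) denotes the open metric ball of radius ρ centered at z. -/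
open Metric Set WithLp

theorem JoinedIn.of_continuousOn_Icc {X : Type*} [TopologicalSpace X] {F : Set X} {f : ℝ → X}
    {a b : ℝ} (hab : a ≤ b) (hf : ContinuousOn f (Icc a b)) (hF : MapsTo f (Icc a b) F) :
    JoinedIn F (f a) (f b) :=
  (((convex_Icc a b).isPathConnected (nonempty_Icc.2 hab)).image' hf).joinedIn _
    (mem_image_of_mem f (left_mem_Icc.2 hab)) _ (mem_image_of_mem f (right_mem_Icc.2 hab))
    |>.mono (image_subset_iff.2 hF)

section UpperHalf

variable {Y : Type*} [MetricSpace Y]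

theorem dist_toLp_prod_zero (y y₀ : Y) (s : ℝ) :
    dist (toLp 2 (y, s)) (toLp 2 (y₀, 0)) = √(dist y y₀ ^ 2 + s ^ 2) := by
  rw [prod_dist_eq_add (by norm_num)]
  simp [Real.sqrt_eq_rpow, sq_abs]

def upperHalfAnnulus (y₀ : Y) (r L : ℝ) : Set (WithLp 2 (Y × ℝ)) :=
  (ball (toLp 2 (y₀, 0)) L \ ball (toLp 2 (y₀, 0)) r) ∩ {z | 0 ≤ z.snd}

theorem toLp_mem_upperHalfAnnulus_iff {y₀ y : Y} {r L s : ℝ} :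
    toLp 2 (y, s) ∈ upperHalfAnnulus y₀ r L ↔
      r ≤ √(dist y y₀ ^ 2 + s ^ 2) ∧ √(dist y y₀ ^ 2 + s ^ 2) < L ∧ 0 ≤ s := by
  rw [← dist_toLp_prod_zero]
  simp only [upperHalfAnnulus, mem_inter_iff, mem_sdiff, mem_ball, not_lt, mem_ofPred_eq, toLp_snd]
  tauto

theorem joinedIn_sphere_of_geodesic {γ : ℝ → Y} {d t : ℝ} (hd : 0 ≤ d) (ht : 0 ≤ t)
    (hγ : ∀ a ∈ Icc 0 d, ∀ b ∈ Icc 0 d, dist (γ a) (γ b) = |a - b|) :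
    JoinedIn (sphere (toLp 2 (γ 0, 0)) √(d ^ 2 + t ^ 2) ∩ {z | 0 ≤ z.snd})
      (toLp 2 (γ 0, √(d ^ 2 + t ^ 2))) (toLp 2 (γ d, t)) := by
  have hγ_cont : ContinuousOn γ (Icc 0 d) :=
    (LipschitzOnWith.of_dist_le_mul (K := 1) fun a ha b hb => by
      simp [hγ a ha b hb, Real.dist_eq]).continuousOn
  have hmaps : MapsTo (fun a => toLp 2 (γ a, √(d ^ 2 + t ^ 2 - a ^ 2))) (Icc 0 d)
      (sphere (toLp 2 (γ 0, 0)) √(d ^ 2 + t ^ 2) ∩ {z | 0 ≤ z.snd}) := by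
    rintro a ⟨ha₀, had⟩
    have hsq : a ^ 2 ≤ d ^ 2 + t ^ 2 := by nlinarith
    refine ⟨?_, Real.sqrt_nonneg _⟩
    rw [mem_sphere, dist_toLp_prod_zero, hγ a ⟨ha₀, had⟩ 0 ⟨le_rfl, hd⟩, sub_zero, sq_abs,
      Real.sq_sqrt (by linarith), add_sub_cancel]
  simpa [Real.sqrt_sq ht] using JoinedIn.of_continuousOn_Icc hd
    ((prod_continuous_toLp 2 Y ℝ).comp_continuousOn (hγ_cont.prodMk (by fun_prop))) hmaps

theorem joinedIn_upperHalfAnnulus_axis (y₀ : Y) {r L ρ : ℝ} (hr : 0 ≤ r) (hrρ : r ≤ ρ)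
    (hρL : ρ < L) : JoinedIn (upperHalfAnnulus y₀ r L) (toLp 2 (y₀, r)) (toLp 2 (y₀, ρ)) := by
  refine JoinedIn.of_continuousOn_Icc (f := fun s => toLp 2 (y₀, s)) hrρ (by fun_prop) ?_
  rintro s ⟨hrs, hsρ⟩
  have hs : 0 ≤ s := hr.trans hrs
  simp only [toLp_mem_upperHalfAnnulus_iff, dist_self]
  rw [zero_pow two_ne_zero, zero_add, Real.sqrt_sq hs]
  exact ⟨hrs, hsρ.trans_lt hρL, hs⟩

theorem sphere_inter_subset_upperHalfAnnulus (y₀ : Y) {r L ρ : ℝ} (hrρ : r ≤ ρ) (hρL : ρ < L) :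
    sphere (toLp 2 (y₀, 0)) ρ ∩ {z | 0 ≤ z.snd} ⊆ upperHalfAnnulus y₀ r L := by
  rintro z ⟨hz, hz₂⟩
  rw [mem_sphere] at hz
  exact ⟨⟨by simpa [hz] using hρL, by simpa [hz] using hrρ⟩, hz₂⟩

end UpperHalf

theorem upper_half_ball_diff_ball_pathConnected (Y : Type*) [MetricSpace Y]
    (hY : IsLengthSpace Y) (y₀ : Y) (r L : ℝ) (hr : 0 < r) (hrL : r < L) :
    IsPathConnected
      ((Metric.ball ((WithLp.equiv 2 (Y × ℝ)).symm (y₀, 0)) L \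
          Metric.ball ((WithLp.equiv 2 (Y × ℝ)).symm (y₀, 0)) r) ∩
        {z : WithLp 2 (Y × ℝ) | 0 ≤ (WithLp.equiv 2 (Y × ℝ) z).2}) := by
  change IsPathConnected (upperHalfAnnulus y₀ r L)
  refine ⟨toLp 2 (y₀, r), (joinedIn_upperHalfAnnulus_axis y₀ hr.le le_rfl hrL).source_mem, ?_⟩
  rintro ⟨y, t⟩ hz
  rw [toLp_mem_upperHalfAnnulus_iff, dist_comm y y₀] at hz
  obtain ⟨hrρ, hρL, ht⟩ := hz
  obtain ⟨γ, hγ₀, hγ₁, hγ⟩ := hY y₀ y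
  have arc := joinedIn_sphere_of_geodesic dist_nonneg ht hγ
  rw [hγ₀, hγ₁] at arc
  exact (joinedIn_upperHalfAnnulus_axis y₀ hr.le hrρ hρL).trans
    (arc.mono (sphere_inter_subset_upperHalfAnnulus y₀ hrρ hρL))
end

section
/- In the Euclidean plane ℝ², let Y = ℝ² \ ((0,1) × (−1,1)) be the complement of the open rectangle {(x,y) : 0 < x < 1, −1 < y < 1}, equipped with the restriction of the Euclidean metric. Then the open ball {p ∈ Y : ‖p‖ < 1.01} of radius 1.01 centered at the origin (0,0) ∈ Y is not a connected subset of Y. -/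
/-! The vertical line `x = 1/2` separates the ball: it crosses the removed rectangle, so its
points in `Y` satisfy `|y| ≥ 1` and have norm at least `√(5/4) > 1.01`, while the ball contains
the origin and `(1, 0)` on either side of it. A connected ball would contradict the
intermediate value theorem for the first coordinate. -/

open Set

lemma one_le_abs_of_outside_rectangle {x y : ℝ} (h : ¬ (0 < x ∧ x < 1 ∧ -1 < y ∧ y < 1))
    (hx₀ : 0 < x) (hx₁ : x < 1) : 1 ≤ |y| := by
  by_contra! hy
  exact h ⟨hx₀, hx₁, (abs_lt.mp hy).1, (abs_lt.mp hy).2⟩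

lemma EuclideanSpace.norm_sq_fin_two (p : EuclideanSpace ℝ (Fin 2)) :
    ‖p‖ ^ 2 = p 0 ^ 2 + p 1 ^ 2 := by
  simp [EuclideanSpace.real_norm_sq_eq, Fin.sum_univ_two]

lemma sq_add_one_le_norm_sq_of_outside_rectangle {p : EuclideanSpace ℝ (Fin 2)}
    (hp : ¬ (0 < p 0 ∧ p 0 < 1 ∧ -1 < p 1 ∧ p 1 < 1)) (hx₀ : 0 < p 0) (hx₁ : p 0 < 1) :
    p 0 ^ 2 + 1 ≤ ‖p‖ ^ 2 := by
  have hy_sq : 1 ≤ p 1 ^ 2 :=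
    (one_le_sq_iff_one_le_abs _).mpr (one_le_abs_of_outside_rectangle hp hx₀ hx₁)
  rw [EuclideanSpace.norm_sq_fin_two]
  linarith

/-- In the plane with the open rectangle `(0,1) × (-1,1)` removed (with the
subspace metric), the open ball of radius `1.01` around the origin is not
connected. -/
theorem ball_not_connected_in_plane_minus_rectangle :
    ¬ IsConnected
      {q : {p : EuclideanSpace ℝ (Fin 2) |
              ¬ (0 < p 0 ∧ p 0 < 1 ∧ -1 < p 1 ∧ p 1 < 1)} |
        ‖(q : EuclideanSpace ℝ (Fin 2))‖ < 1.01} := by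
  intro hconn
  have h_first_coord : Continuous fun q : {p : EuclideanSpace ℝ (Fin 2) |
      ¬ (0 < p 0 ∧ p 0 < 1 ∧ -1 < p 1 ∧ p 1 < 1)} => (q : EuclideanSpace ℝ (Fin 2)) 0 := by
    fun_prop
  obtain ⟨q, hq_ball : ‖(q : EuclideanSpace ℝ (Fin 2))‖ < 1.01,
      hq_half : (q : EuclideanSpace ℝ (Fin 2)) 0 = 1 / 2⟩ :=
    hconn.isPreconnected.intermediate_value (a := ⟨0, by simp⟩)
      (b := ⟨EuclideanSpace.single 0 1, by simp⟩) (by simp; norm_num) (by simp; norm_num)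
      h_first_coord.continuousOn (show (1 / 2 : ℝ) ∈ Icc 0 1 by norm_num)
  have h_norm_sq := sq_add_one_le_norm_sq_of_outside_rectangle q.2
    (by rw [hq_half]; norm_num) (by rw [hq_half]; norm_num)
  rw [hq_half] at h_norm_sq
  nlinarith [norm_nonneg (q : EuclideanSpace ℝ (Fin 2)), hq_ball]
end

section
/- Let K > 0 and l > 0 be real numbers, and let u : ℝ → ℝ be a continuously differentiable function with u(s) > 0 for all s ∈ [0, l]. Suppose that for every continuously differentiable function f : ℝ → ℝ with f(0) = f(l) = 0 one has ∫₀^l ( u(s) f'(s)² + 2 f(s) u'(s) f'(s) − K u(s) f(s)² ) ds ≥ 0. Then l ≤ 2π / √(3K). -/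
/-!
Test the stability inequality with `f = sin (π s / l) / √u`. Writing `u = r²` and `f = φ / r`, the
terms involving `r'` combine into `φ'² + 2 φ' t - 3 t²` with `t = φ r' / r`, which is at most
`4/3 φ'²`; so the integrand is bounded by `4/3 φ'² - K φ²`, whose integral over `[0, l]` is
`l/2 (4π²/(3l²) - K)`. Its nonnegativity is `3 K l² ≤ 4 π²`. Since `f` has to be `C¹` on all of
`ℝ`, `u` is first replaced by a positive `C¹` function agreeing with it near `[0, l]`.
-/

open Real intervalIntegral Filter Topology Set
open scoped Manifold

theorem le_div_sqrt_of_mul_sq_le {a c l : ℝ} (ha : 0 < a) (hc : 0 ≤ c) (hl : 0 ≤ l)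
    (h : a * l ^ 2 ≤ c ^ 2) : l ≤ c / √a := by
  rw [le_div_iff₀ (sqrt_pos.2 ha), ← sqrt_sq hl, ← sqrt_mul' _ ha.le, ← sqrt_sq hc]
  exact sqrt_le_sqrt (by linarith)

theorem exists_pos_contDiff_eventuallyEq_nhdsSet {E : Type*} [NormedAddCommGroup E]
    [NormedSpace ℝ E] [FiniteDimensional ℝ E] {n : ℕ∞} {u : E → ℝ} {s : Set E}
    (hu : ContDiff ℝ n u) (hs : IsClosed s) (hpos : ∀ x ∈ s, 0 < u x) :
    ∃ g : E → ℝ, ContDiff ℝ n g ∧ (∀ x, 0 < g x) ∧ g =ᶠ[𝓝ˢ s] u := by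
  have hsub : s ⊆ interior {x | 0 < u x} := by
    rw [(isOpen_lt continuous_const hu.continuous).interior_eq]
    exact hpos
  obtain ⟨χ, hχ1, hχ0, hχmem⟩ :=
    exists_contMDiffMap_one_nhds_of_subset_interior 𝓘(ℝ, E) (n := n) hs hsub
  have hχ : ContDiff ℝ n χ := contMDiff_iff_contDiff.mp χ.contMDiff
  refine ⟨fun x => χ x * u x + (1 - χ x), (hχ.mul hu).add (contDiff_const.sub hχ), fun x => ?_,
    hχ1.mono fun x hx => by simp [hx]⟩
  obtain ⟨hχ0x, hχ1x⟩ := hχmem x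
  rcases hχ0x.eq_or_lt with h | h
  · simp [← h]
  · have hux : 0 < u x := by_contra fun hux => h.ne' (hχ0 x hux)
    nlinarith [mul_pos h hux]

noncomputable def stabilityIntegrand (K : ℝ) (u f : ℝ → ℝ) (s : ℝ) : ℝ :=
  u s * (deriv f s) ^ 2 + 2 * f s * deriv u s * deriv f s - K * u s * (f s) ^ 2

section stabilityIntegrand

variable {K : ℝ} {u v f : ℝ → ℝ} {s : ℝ}

theorem stabilityIntegrand_congr (h : u =ᶠ[𝓝 s] v) :
    stabilityIntegrand K u f s = stabilityIntegrand K v f s := by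
  simp only [stabilityIntegrand, h.eq_of_nhds, h.deriv_eq]

theorem continuous_stabilityIntegrand (hu : ContDiff ℝ 1 u) (hf : ContDiff ℝ 1 f) :
    Continuous (stabilityIntegrand K u f) := by
  have hu' := hu.continuous_deriv le_rfl
  have hf' := hf.continuous_deriv le_rfl
  unfold stabilityIntegrand
  fun_prop

theorem stabilityIntegrand_sq_div_le {r φ : ℝ → ℝ} (hr : DifferentiableAt ℝ r s)
    (hφ : DifferentiableAt ℝ φ s) (hr0 : r s ≠ 0) :
    stabilityIntegrand K (fun x => r x ^ 2) (fun x => φ x / r x) s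
      ≤ 4 / 3 * deriv φ s ^ 2 - K * φ s ^ 2 := by
  have hdiv : deriv (fun x => φ x / r x) s = (deriv φ s * r s - φ s * deriv r s) / r s ^ 2 :=
    deriv_div hφ hr hr0
  have hsq : deriv (fun x => r x ^ 2) s = 2 * r s * deriv r s := by
    rw [deriv_fun_pow hr]; ring
  have hexpand : stabilityIntegrand K (fun x => r x ^ 2) (fun x => φ x / r x) s
      = 4 / 3 * deriv φ s ^ 2 - K * φ s ^ 2
        - (deriv φ s - 3 * φ s * deriv r s / r s) ^ 2 / 3 := by
    simp only [stabilityIntegrand, hdiv, hsq]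
    field_simp
    ring
  rw [hexpand]
  linarith [sq_nonneg (deriv φ s - 3 * φ s * deriv r s / r s)]

end stabilityIntegrand

theorem integral_sin_pi_mul_div_sq {l : ℝ} (hl : l ≠ 0) :
    ∫ s in (0:ℝ)..l, sin (π * s / l) ^ 2 = l / 2 := by
  have hc : π / l ≠ 0 := div_ne_zero pi_ne_zero hl
  simp_rw [mul_div_right_comm π _ l]
  rw [integral_comp_mul_left (fun x => sin x ^ 2) hc, integral_sin_sq,
    div_mul_cancel₀ π hl]
  simp [field]

theorem integral_cos_pi_mul_div_sq {l : ℝ} (hl : l ≠ 0) :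
    ∫ s in (0:ℝ)..l, cos (π * s / l) ^ 2 = l / 2 := by
  have hc : π / l ≠ 0 := div_ne_zero pi_ne_zero hl
  simp_rw [mul_div_right_comm π _ l]
  rw [integral_comp_mul_left (fun x => cos x ^ 2) hc, integral_cos_sq,
    div_mul_cancel₀ π hl]
  simp [field]

theorem integral_sine_mode {K l : ℝ} (hl : l ≠ 0) :
    ∫ s in (0:ℝ)..l, (4 / 3 * deriv (fun x => sin (π * x / l)) s ^ 2 - K * sin (π * s / l) ^ 2)
      = l / 2 * (4 / 3 * (π / l) ^ 2 - K) := by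
  have hderiv : ∀ s, deriv (fun x => sin (π * x / l)) s = π / l * cos (π * s / l) := by
    intro s
    have := ((hasDerivAt_id s).const_mul π |>.div_const l).sin
    simp only [id, mul_one] at this
    rw [this.deriv]; ring
  simp_rw [hderiv, mul_pow]
  rw [integral_sub, integral_const_mul, integral_const_mul, integral_const_mul,
    integral_sin_pi_mul_div_sq hl, integral_cos_pi_mul_div_sq hl]
  · ring
  all_goals exact (by fun_prop : Continuous _).intervalIntegrable _ _

theorem length_bound_of_stability (K l : ℝ) (hK : 0 < K) (hl : 0 < l)
    (u : ℝ → ℝ) (hu : ContDiff ℝ 1 u) (hupos : ∀ s ∈ Set.Icc 0 l, 0 < u s)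
    (hstab : ∀ f : ℝ → ℝ, ContDiff ℝ 1 f → f 0 = 0 → f l = 0 →
      0 ≤ ∫ s in (0:ℝ)..l,
        (u s * (deriv f s) ^ 2 + 2 * f s * deriv u s * deriv f s
          - K * u s * (f s) ^ 2)) :
    l ≤ 2 * π / Real.sqrt (3 * K) := by
  obtain ⟨g, hg, hgpos, hgu⟩ := exists_pos_contDiff_eventuallyEq_nhdsSet hu isClosed_Icc hupos
  set r : ℝ → ℝ := fun x => √(g x)
  set φ : ℝ → ℝ := fun x => sin (π * x / l)
  have hr : ContDiff ℝ 1 r := hg.sqrt fun x => (hgpos x).ne'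
  have hr0 : ∀ x, r x ≠ 0 := fun x => (sqrt_pos.2 (hgpos x)).ne'
  have hφ : ContDiff ℝ 1 φ := by fun_prop
  have hf : ContDiff ℝ 1 (fun x => φ x / r x) := hφ.div hr hr0
  have hrg : (fun x => r x ^ 2) = g := funext fun x => sq_sqrt (hgpos x).le
  have hpoint : ∀ s ∈ Icc 0 l,
      stabilityIntegrand K u (fun x => φ x / r x) s ≤ 4 / 3 * deriv φ s ^ 2 - K * φ s ^ 2 := by
    intro s hs
    rw [← stabilityIntegrand_congr (hgu.filter_mono (nhds_le_nhdsSet hs)), ← hrg]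
    exact stabilityIntegrand_sq_div_le (hr.differentiable one_ne_zero s)
      (hφ.differentiable one_ne_zero s) (hr0 s)
  have hmode : 0 ≤ l / 2 * (4 / 3 * (π / l) ^ 2 - K) := by
    refine (hstab _ hf (by simp [φ]) (by simp [φ, hl.ne'])).trans ?_
    rw [← integral_sine_mode hl.ne']
    exact integral_mono_on hl.le ((continuous_stabilityIntegrand hu hf).intervalIntegrable _ _)
      ((by fun_prop : Continuous _).intervalIntegrable _ _) hpoint
  refine le_div_sqrt_of_mul_sq_le (by positivity) (by positivity) hl.le ?_
  have h := mul_nonneg (mul_nonneg (by norm_num : (0:ℝ) ≤ 6) hl.le) hmode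
  field_simp at h
  linarith
end

section
/- For every real number x ≥ 0, one has (2/π)² · (arctan x)² + 1/(1 + x²)² ≤ 1; equivalently, (2/π · arctan x)² ≤ 1 − 1/(1+x²)². -/
open Real

theorem arctan_sq_add_inv_one_add_sq_sq_le_one (x : ℝ) (hx : 0 ≤ x) :
    (2 / π) ^ 2 * (arctan x) ^ 2 + 1 / (1 + x ^ 2) ^ 2 ≤ 1 := by
  have hpi : 0 < π := Real.pi_pos
  have h1 : 2 / π * arctan x ≤ sin (arctan x) :=
    Real.mul_le_sin (Real.arctan_zero ▸ Real.arctan_strictMono.monotone hx) (Real.arctan_lt_pi_div_two x).le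
  rw [Real.sin_arctan] at h1
  have hs : (0:ℝ) < 1 + x ^ 2 := by positivity
  have hsq : Real.sqrt (1 + x ^ 2) ^ 2 = 1 + x ^ 2 := Real.sq_sqrt hs.le
  have ha : 0 ≤ arctan x := Real.arctan_zero ▸ Real.arctan_strictMono.monotone hx
  have hnn : 0 ≤ 2 / π * arctan x := by positivity
  have h2 : (2 / π * arctan x) ^ 2 ≤ (x / √(1 + x ^ 2)) ^ 2 := by
    apply pow_le_pow_left₀ hnn h1
  rw [div_pow, hsq] at h2
  have h3 : (2 / π) ^ 2 * arctan x ^ 2 ≤ x ^ 2 / (1 + x ^ 2) := by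
    calc (2 / π) ^ 2 * arctan x ^ 2 = (2 / π * arctan x) ^ 2 := by ring
    _ ≤ _ := h2
  have key : x ^ 2 / (1 + x ^ 2) + 1 / (1 + x ^ 2) ^ 2 ≤ 1 := by
    rw [div_add_div _ _ (ne_of_gt hs) (by positivity), div_le_one (by positivity)]
    ring_nf
    nlinarith [sq_nonneg x, sq_nonneg (x^2)]
  linarith
end

section
/- Let b be a real number with 0 < b ≤ 1 and define f : ℝ → ℝ by f(r) = (2b/π) · arctan(π r / (2b)). Then for every r ≥ 0: (i) the derivative satisfies f'(r) = 1 / (1 + (π r/(2b))²), (ii) the second derivative satisfies f''(r) ≤ 0, and (iii) f'(r)² + f(r)² ≤ 1. -/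
/-!
Write `a = 2b/π`, so `f r = a · arctan (r / a)` and `f' r = 1 / (1 + (r / a)²)`. With
`t = arctan (r / a) ∈ [0, π/2)` one has `f' r = cos² t` and `f r = a t`. Since `a ≤ 2/π`,
Jordan's inequality `(2/π) t ≤ sin t` gives `(f r)² ≤ sin² t`, while `(f' r)² = cos⁴ t ≤ cos² t`.
-/

open Real

section ScaledArctan

variable {a : ℝ}

theorem hasDerivAt_mul_arctan_div (ha : a ≠ 0) (x : ℝ) :
    HasDerivAt (fun r => a * arctan (r / a)) (1 / (1 + (x / a) ^ 2)) x := by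
  refine (((hasDerivAt_id' x).div_const a).arctan.const_mul a).congr_deriv ?_
  field_simp

theorem deriv_mul_arctan_div (ha : a ≠ 0) :
    deriv (fun r => a * arctan (r / a)) = fun x => 1 / (1 + (x / a) ^ 2) :=
  funext fun x => (hasDerivAt_mul_arctan_div ha x).deriv

theorem hasDerivAt_one_div_one_add_div_sq (x : ℝ) :
    HasDerivAt (fun r => 1 / (1 + (r / a) ^ 2))
      (-(2 * x / a ^ 2) / (1 + (x / a) ^ 2) ^ 2) x := by
  have hden : HasDerivAt (fun r => 1 + (r / a) ^ 2) (2 * x / a ^ 2) x := by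
    refine ((((hasDerivAt_id' x).div_const a).fun_pow 2).const_add 1).congr_deriv ?_
    norm_num
    ring
  simpa only [one_div] using hden.fun_inv (by positivity)

theorem deriv_deriv_mul_arctan_div_nonpos (ha : a ≠ 0) {x : ℝ} (hx : 0 ≤ x) :
    deriv (deriv fun r => a * arctan (r / a)) x ≤ 0 := by
  rw [deriv_mul_arctan_div ha, (hasDerivAt_one_div_one_add_div_sq x).deriv]
  exact div_nonpos_of_nonpos_of_nonneg (neg_nonpos.2 (by positivity)) (by positivity)

theorem cos_sq_sq_add_mul_sq_le_one (ha₀ : 0 ≤ a) (ha : a ≤ 2 / π) {t : ℝ} (ht₀ : 0 ≤ t)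
    (ht : t ≤ π / 2) : (cos t ^ 2) ^ 2 + (a * t) ^ 2 ≤ 1 := by
  have hat : 0 ≤ a * t := mul_nonneg ha₀ ht₀
  have hsin : a * t ≤ sin t :=
    (mul_le_mul_of_nonneg_right ha ht₀).trans (mul_le_sin ht₀ ht)
  have hcos : (cos t ^ 2) ^ 2 ≤ cos t ^ 2 :=
    pow_le_of_le_one (sq_nonneg _) (cos_sq_le_one t) two_ne_zero
  nlinarith [sin_sq_add_cos_sq t]

theorem deriv_mul_arctan_div_sq_add_sq_le_one (ha₀ : 0 < a) (ha : a ≤ 2 / π) {x : ℝ}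
    (hx : 0 ≤ x) :
    deriv (fun r => a * arctan (r / a)) x ^ 2 + (a * arctan (x / a)) ^ 2 ≤ 1 := by
  rw [deriv_mul_arctan_div ha₀.ne']
  beta_reduce
  rw [← cos_sq_arctan]
  exact cos_sq_sq_add_mul_sq_le_one ha₀.le ha (arctan_nonneg.2 (by positivity))
    (arctan_lt_pi_div_two _).le

end ScaledArctan

theorem arctan_warping_properties (b : ℝ) (hb : 0 < b) (hb1 : b ≤ 1)
    (f : ℝ → ℝ) (hf : f = fun r => (2 * b / π) * arctan (π * r / (2 * b)))
    (r : ℝ) (hr : 0 ≤ r) :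
    deriv f r = 1 / (1 + (π * r / (2 * b)) ^ 2) ∧
    deriv (deriv f) r ≤ 0 ∧
    (deriv f r) ^ 2 + (f r) ^ 2 ≤ 1 := by
  set a := 2 * b / π with ha_def
  have ha₀ : 0 < a := by positivity
  have ha : a ≤ 2 / π := div_le_div_of_nonneg_right (by linarith) pi_pos.le
  have hdiv : ∀ x, π * x / (2 * b) = x / a := fun x => by
    rw [ha_def]; field_simp
  simp only [hdiv] at hf ⊢
  subst hf
  exact ⟨congrFun (deriv_mul_arctan_div ha₀.ne') r,
    deriv_deriv_mul_arctan_div_nonpos ha₀.ne' hr,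
    deriv_mul_arctan_div_sq_add_sq_le_one ha₀ ha hr⟩
end

section
/- Let b be a real number with 0 < b ≤ 1 and define f : ℝ → ℝ by f(r) = b · tanh(r/b). Then for every r ≥ 0: (i) the derivative satisfies f'(r) = 1/cosh(r/b)² = 4/(e^{−r/b} + e^{r/b})², (ii) the second derivative satisfies f''(r) ≤ 0, and (iii) f'(r)² + f(r)² ≤ 1. -/
open Real

theorem Real.hasDerivAt_tanh (x : ℝ) : HasDerivAt tanh (1 / cosh x ^ 2) x := by
  have h := (hasDerivAt_sinh x).div (hasDerivAt_cosh x) (cosh_pos x).ne'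
  rwa [← sq, ← sq, cosh_sq_sub_sinh_sq, ← show tanh = sinh / cosh from
    funext tanh_eq_sinh_div_cosh] at h

theorem Real.hasDerivAt_one_div_cosh_sq (x : ℝ) :
    HasDerivAt (fun x => 1 / cosh x ^ 2) (-(2 * sinh x / cosh x ^ 3)) x := by
  refine ((hasDerivAt_const x (1 : ℝ)).div ((hasDerivAt_cosh x).fun_pow 2)
    (pow_ne_zero 2 (cosh_pos x).ne')).congr_deriv ?_
  have h_cosh := (cosh_pos x).ne'
  field_simp
  ring

theorem Real.one_div_cosh_sq_eq_four_div_sq (x : ℝ) :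
    1 / cosh x ^ 2 = 4 / (exp (-x) + exp x) ^ 2 := by
  rw [cosh_eq, div_pow, one_div_div, add_comm]
  norm_num

theorem Real.tanh_sq_add_one_div_cosh_sq (x : ℝ) : tanh x ^ 2 + 1 / cosh x ^ 2 = 1 := by
  rw [tanh_eq_sinh_div_cosh, div_pow, ← add_div, ← cosh_sq,
    div_self (pow_ne_zero 2 (cosh_pos x).ne')]

/-- With `u = 1 / cosh x ^ 2 ∈ (0, 1]` and `tanh x ^ 2 = 1 - u`, this is `u ^ 2 ≤ u`. -/
theorem sq_one_div_cosh_sq_add_sq_mul_tanh_le_one {b : ℝ} (hb : b ^ 2 ≤ 1) (x : ℝ) :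
    (1 / cosh x ^ 2) ^ 2 + (b * tanh x) ^ 2 ≤ 1 := by
  have h_tanh := tanh_sq_add_one_div_cosh_sq x
  have h_pos : 0 ≤ 1 / cosh x ^ 2 := by positivity
  have h_le_one : 1 / cosh x ^ 2 ≤ 1 :=
    div_le_one_of_le₀ (one_le_pow₀ (one_le_cosh x)) (by positivity)
  rw [mul_pow]
  nlinarith [mul_le_of_le_one_left (sq_nonneg (tanh x)) hb, mul_le_of_le_one_left h_pos h_le_one]

section
variable {b : ℝ}

theorem hasDerivAt_mul_tanh_div (hb : b ≠ 0) (r : ℝ) :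
    HasDerivAt (fun r => b * tanh (r / b)) (1 / cosh (r / b) ^ 2) r := by
  refine (((hasDerivAt_tanh (r / b)).comp r ((hasDerivAt_id r).div_const b)).const_mul b
    ).congr_deriv ?_
  field_simp

theorem deriv_mul_tanh_div (hb : b ≠ 0) :
    deriv (fun r => b * tanh (r / b)) = fun r => 1 / cosh (r / b) ^ 2 :=
  funext fun r => (hasDerivAt_mul_tanh_div hb r).deriv

theorem deriv_one_div_cosh_sq_div_nonpos (hb : 0 ≤ b) {r : ℝ} (hr : 0 ≤ r) :
    deriv (fun r => 1 / cosh (r / b) ^ 2) r ≤ 0 := by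
  have h : HasDerivAt (fun r => 1 / cosh (r / b) ^ 2)
      (-(2 * sinh (r / b) / cosh (r / b) ^ 3) * (1 / b)) r :=
    (hasDerivAt_one_div_cosh_sq (r / b)).comp (h₂ := fun x => 1 / cosh x ^ 2) r
      ((hasDerivAt_id r).div_const b)
  have h_sinh : 0 ≤ sinh (r / b) := sinh_nonneg_iff.2 (div_nonneg hr hb)
  rw [h.deriv, neg_mul, neg_nonpos]
  have h_cosh := cosh_pos (r / b)
  positivity

end

theorem tanh_warping_properties (b : ℝ) (hb : 0 < b) (hb1 : b ≤ 1)
    (f : ℝ → ℝ) (hf : f = fun r => b * tanh (r / b))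
    (r : ℝ) (hr : 0 ≤ r) :
    (deriv f r = 1 / (cosh (r / b)) ^ 2 ∧
      deriv f r = 4 / (Real.exp (-r / b) + Real.exp (r / b)) ^ 2) ∧
    deriv (deriv f) r ≤ 0 ∧
    (deriv f r) ^ 2 + (f r) ^ 2 ≤ 1 := by
  subst hf
  rw [deriv_mul_tanh_div hb.ne']
  refine ⟨⟨rfl, by rw [neg_div]; exact one_div_cosh_sq_eq_four_div_sq (r / b)⟩,
    deriv_one_div_cosh_sq_div_nonpos hb.le hr, ?_⟩
  exact sq_one_div_cosh_sq_add_sq_mul_tanh_le_one (pow_le_one₀ hb.le hb1) (r / b)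
end

section
/- Let M be a σ-compact Hausdorff finite-dimensional smooth manifold without boundary, let A ⊆ M be a closed set, let B ⊆ M be a nonempty compact set with A ∩ B = ∅, and let c > 0 be a real number. Then there exists a smooth function f : M → ℝ such that f = 0 on A, f > c on B, and c is a regular value of f, i.e., for every x ∈ M with f(x) = c the differential of f at x is nonzero (equivalently, surjective onto ℝ). -/
/-!
Take a compactly supported smooth Urysohn function `g`, equal to `0` on `A` and `1` on `B`, and
perturb it to `g + ∑ₖ aₖ ∘ Ψₖ`, where the `aₖ` are covectors and `Ψₖ = φₖ • chartₖ` are cut-off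
charts, finitely many of them covering the compact set `{1/4 ≤ g ≤ 3/4}`. Where `Ψⱼ` is the chart,
the differential of the perturbed function is `aⱼ` plus a quantity not depending on `aⱼ`, so at a
critical point `aⱼ` is determined by the point and the other covectors. The pairs `(a, t)` with `t`
a critical value of the perturbation at such a point are therefore a `C¹` image of a space of one
dimension less, and their complement is dense. For `a` small and `t` near `1/2` outside this set,
`t` is a regular value, and `(c / t)` times the perturbed function is the required function.
-/

open scoped Manifold ContDiff
open Set Function Module Filter Topology

section Critical

variable {E H M : Type*} [NormedAddCommGroup E] [NormedSpace ℝ E] [TopologicalSpace H]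
  [TopologicalSpace M] [ChartedSpace H M] (I : ModelWithCorners ℝ E H)

def criticalValuePairs {P : Type*} (F : P → M → ℝ) (s : Set M) : Set (P × ℝ) :=
  {p | ∃ x ∈ s, mfderiv I 𝓘(ℝ) (F p.1) x = 0 ∧ F p.1 x = p.2}

def IsRegularValue (f : M → ℝ) (t : ℝ) : Prop :=
  ∀ x, f x = t → mfderiv I 𝓘(ℝ) f x ≠ 0

variable {I} in
theorem IsRegularValue.const_mul {f : M → ℝ} {t : ℝ} (h : IsRegularValue I f t) {c : ℝ}
    (hc : c ≠ 0) : IsRegularValue I (fun x => c * f x) (c * t) := by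
  intro x hx
  have hfx : f x = t := mul_left_cancel₀ hc hx
  have hdiff : MDifferentiableAt I 𝓘(ℝ) f x := by
    by_contra hnd
    exact h x hfx (mfderiv_zero_of_not_mdifferentiableAt hnd)
  rw [show (fun x => c * f x) = c • f from rfl, const_smul_mfderiv hdiff]
  exact smul_ne_zero hc (h x hfx)

end Critical

section Euclidean

variable {E : Type*} [NormedAddCommGroup E] [NormedSpace ℝ E] [FiniteDimensional ℝ E]

theorem ContDiffOn.dimH_image_le_of_isOpen {F : Type*} [NormedAddCommGroup F] [NormedSpace ℝ F]
    {f : E → F} {s : Set E} (hf : ContDiffOn ℝ 1 f s) (hs : IsOpen s) :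
    dimH (f '' s) ≤ dimH s :=
  dimH_image_le_of_locally_lipschitzOn fun x hx =>
    let ⟨C, u, hu, hf⟩ := ((hf x hx).contDiffAt (hs.mem_nhds hx)).exists_lipschitzOnWith
    ⟨C, u, nhdsWithin_le_nhds hu, hf⟩

theorem finrank_strongDual : finrank ℝ (StrongDual ℝ E) = finrank ℝ E :=
  (LinearMap.toContinuousLinearMap : (E →ₗ[ℝ] ℝ) ≃ₗ[ℝ] StrongDual ℝ E).finrank_eq.symm.trans
    (Module.finrank_linearMap_self ℝ ℝ E)

variable {P : Type*} [NormedAddCommGroup P] [NormedSpace ℝ P] [FiniteDimensional ℝ P]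

theorem dimH_criticalValuePairs_le {U : Set E} (hU : IsOpen U) {F : P → E → ℝ}
    (hF : ContDiffOn ℝ 2 (uncurry F) (univ ×ˢ U))
    (π : P →L[ℝ] StrongDual ℝ E) (σ : StrongDual ℝ E →L[ℝ] P) (hπσ : ∀ ℓ, π (σ ℓ) = ℓ)
    (hFσ : ∀ a ℓ, ∀ y ∈ U, F (a + σ ℓ) y = F a y + ℓ y) :
    dimH (criticalValuePairs 𝓘(ℝ, E) F U) ≤ finrank ℝ P := by
  set K := LinearMap.ker (π : P →ₗ[ℝ] StrongDual ℝ E)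
  -- A critical pair `(a, F a y)` is `Γ (y, a - σ (π a))`: translating the parameter by `σ ℓ`
  -- shifts the differential by `ℓ`, and the differential of `F a` at `y` vanishes.
  set Γ : E × K → P × ℝ := fun q =>
    (q.2 - σ (fderiv ℝ (F q.2) q.1), F q.2 q.1 - fderiv ℝ (F q.2) q.1 q.1)
  have hΓ : ContDiffOn ℝ 1 Γ (U ×ˢ univ) := by
    intro q hq
    have hFq : ContDiffAt ℝ 2 (uncurry fun (q : E × K) y => F q.2 y) (q, q.1) :=
      (hF.contDiffAt ((isOpen_univ.prod hU).mem_nhds ⟨trivial, hq.1⟩)).comp _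
        ((K.subtypeL.contDiff.comp (contDiff_snd.comp contDiff_fst)).prodMk contDiff_snd).contDiffAt
    have hD : ContDiffAt ℝ 1 (fun q : E × K => fderiv ℝ (F q.2) q.1) q :=
      hFq.fderiv contDiffAt_fst le_rfl
    refine ContDiffAt.contDiffWithinAt (ContDiffAt.prodMk ?_ ?_)
    · exact (K.subtypeL.contDiff.comp contDiff_snd).contDiffAt.sub
        (σ.contDiff.contDiffAt.comp q hD)
    · exact (hFq.comp q (contDiffAt_id.prodMk contDiffAt_fst)).of_le (by norm_num) |>.sub
        (hD.clm_apply contDiffAt_fst)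
  have hsub : criticalValuePairs 𝓘(ℝ, E) F U ⊆ Γ '' (U ×ˢ univ) := by
    rintro ⟨a, t⟩ ⟨y, hy, hcrit, ht : F a y = t⟩
    subst ht
    simp only [mfderiv_eq_fderiv] at hcrit
    set b := a - σ (π a)
    have hb : b ∈ K := by simp [b, K, hπσ]
    have hFa : HasFDerivAt (F a) (fderiv ℝ (F a) y) y :=
      (((hF.contDiffAt ((isOpen_univ.prod hU).mem_nhds ⟨trivial, hy⟩)).comp y
        (contDiffAt_const.prodMk contDiffAt_id)).differentiableAt (by norm_num)).hasFDerivAt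
    rw [hcrit] at hFa
    have hFb : fderiv ℝ (F b) y = -π a := by
      have hEq : F b =ᶠ[𝓝 y] fun y' => F a y' - π a y' := by
        filter_upwards [hU.mem_nhds hy] with y' hy'
        rw [eq_sub_iff_add_eq, ← hFσ b (π a) y' hy', sub_add_cancel]
      rw [hEq.fderiv_eq]
      exact (hFa.sub (π a).hasFDerivAt).fderiv.trans (zero_sub _)
    refine ⟨(y, ⟨b, hb⟩), ⟨hy, trivial⟩, ?_⟩
    simp only [Γ, hFb, map_neg, sub_neg_eq_add, neg_apply]
    rw [← hFσ b (π a) y hy]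
    simp [b]
  have hdim : finrank ℝ (E × K) = finrank ℝ P := by
    have hrange : LinearMap.range (π : P →ₗ[ℝ] StrongDual ℝ E) = ⊤ :=
      LinearMap.range_eq_top.2 fun ℓ => ⟨σ ℓ, hπσ ℓ⟩
    rw [Module.finrank_prod, ← LinearMap.finrank_range_add_finrank_ker (π : P →ₗ[ℝ] StrongDual ℝ E),
      hrange, finrank_top, finrank_strongDual]
  calc dimH (criticalValuePairs 𝓘(ℝ, E) F U) ≤ dimH (Γ '' (U ×ˢ univ)) := dimH_mono hsub
    _ ≤ dimH (U ×ˢ univ) := hΓ.dimH_image_le_of_isOpen (hU.prod isOpen_univ)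
    _ ≤ finrank ℝ (E × K) := (dimH_mono (subset_univ _)).trans (Real.dimH_univ_eq_finrank _).le
    _ = finrank ℝ P := by rw [hdim]

end Euclidean

section Manifold

variable {E : Type*} [NormedAddCommGroup E] [NormedSpace ℝ E]
  {M : Type*} [TopologicalSpace M] [ChartedSpace E M]

theorem abs_sum_apply_le {ι : Type*} [Fintype ι] (a : ι → StrongDual ℝ E) (v : ι → E) :
    |∑ k, a k (v k)| ≤ Fintype.card ι * (‖a‖ * ‖v‖) :=
  calc |∑ k, a k (v k)| ≤ ∑ k, ‖a k‖ * ‖v k‖ :=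
        (Finset.abs_sum_le_sum_abs _ _).trans (Finset.sum_le_sum fun k _ => (a k).le_opNorm (v k))
    _ ≤ ∑ _k : ι, ‖a‖ * ‖v‖ := Finset.sum_le_sum fun k _ =>
        mul_le_mul (norm_le_pi_norm a k) (norm_le_pi_norm v k) (norm_nonneg _) (norm_nonneg _)
    _ = Fintype.card ι * (‖a‖ * ‖v‖) := by simp

theorem ContMDiff.add_sum_apply {ι : Type*} [Fintype ι] {n : ℕ∞ω} {g : M → ℝ} {Ψ : M → ι → E}
    (hg : ContMDiff 𝓘(ℝ, E) 𝓘(ℝ) n g) (hΨ : ContMDiff 𝓘(ℝ, E) 𝓘(ℝ, ι → E) n Ψ)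
    (a : ι → StrongDual ℝ E) : ContMDiff 𝓘(ℝ, E) 𝓘(ℝ) n fun x => g x + ∑ k, a k (Ψ x k) :=
  hg.add (contMDiff_finsetSum fun k _ => (a k).contMDiff.comp ((contMDiff_pi_space.1 hΨ) k))

theorem mfderiv_comp_chartAt_symm_eq_zero [IsManifold 𝓘(ℝ, E) 1 M] {f : M → ℝ} {x₀ x : M}
    (hx : x ∈ (chartAt E x₀).source) (hf : MDifferentiableAt 𝓘(ℝ, E) 𝓘(ℝ) f x)
    (h : mfderiv 𝓘(ℝ, E) 𝓘(ℝ) f x = 0) :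
    mfderiv 𝓘(ℝ, E) 𝓘(ℝ) (f ∘ (chartAt E x₀).symm) (chartAt E x₀ x) = 0 := by
  have hsymm : MDifferentiableAt 𝓘(ℝ, E) 𝓘(ℝ, E) (chartAt E x₀).symm (chartAt E x₀ x) :=
    mdifferentiableAt_atlas_symm (chart_mem_atlas E x₀) ((chartAt E x₀).map_source hx)
  have hf' : MDifferentiableAt 𝓘(ℝ, E) 𝓘(ℝ) f ((chartAt E x₀).symm (chartAt E x₀ x)) := by
    rwa [(chartAt E x₀).left_inv hx]
  have h' : mfderiv 𝓘(ℝ, E) 𝓘(ℝ) f ((chartAt E x₀).symm (chartAt E x₀ x)) = 0 := by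
    rwa [← (chartAt E x₀).left_inv hx] at h
  rw [mfderiv_comp _ hf' hsymm, h', ContinuousLinearMap.zero_comp]

theorem dimH_criticalValuePairs_le_of_apply_eq_chartAt [FiniteDimensional ℝ E]
    [IsManifold 𝓘(ℝ, E) 2 M] {ι : Type*} [Fintype ι] [DecidableEq ι] {g : M → ℝ}
    {Ψ : M → ι → E} (hg : ContMDiff 𝓘(ℝ, E) 𝓘(ℝ) 2 g) (hΨ : ContMDiff 𝓘(ℝ, E) 𝓘(ℝ, ι → E) 2 Ψ)
    {W : Set M} (hW : IsOpen W) {x₀ : M} (hWx₀ : W ⊆ (chartAt E x₀).source) {j : ι}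
    (hΨj : ∀ x ∈ W, Ψ x j = chartAt E x₀ x) :
    dimH (criticalValuePairs 𝓘(ℝ, E) (fun (a : ι → StrongDual ℝ E) x => g x + ∑ k, a k (Ψ x k))
      W) ≤ finrank ℝ (ι → StrongDual ℝ E) := by
  set φ := chartAt E x₀
  set f : (ι → StrongDual ℝ E) → M → ℝ := fun a x => g x + ∑ k, a k (Ψ x k)
  have hU : IsOpen (φ '' W) := φ.isOpen_image_of_subset_source hW hWx₀
  have hφW : ∀ y ∈ φ '' W, φ.symm y ∈ W ∧ φ (φ.symm y) = y := by
    rintro _ ⟨x, hx, rfl⟩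
    rw [φ.left_inv (hWx₀ hx)]
    exact ⟨hx, rfl⟩
  have hchart : ContMDiffOn 𝓘(ℝ, E) 𝓘(ℝ, E) 2 φ.symm (φ '' W) :=
    contMDiffOn_chart_symm.mono (image_subset_iff.2 fun x hx => φ.map_source (hWx₀ hx))
  have hG : ContDiffOn ℝ 2 (g ∘ φ.symm) (φ '' W) :=
    contMDiffOn_iff_contDiffOn.1 (hg.comp_contMDiffOn hchart)
  have hZ : ContDiffOn ℝ 2 (Ψ ∘ φ.symm) (φ '' W) :=
    contMDiffOn_iff_contDiffOn.1 (hΨ.comp_contMDiffOn hchart)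
  refine (dimH_mono ?_).trans (dimH_criticalValuePairs_le hU (F := fun a => f a ∘ φ.symm) ?_
    (ContinuousLinearMap.proj j) (ContinuousLinearMap.single ℝ (fun _ : ι => StrongDual ℝ E) j)
    (by simp) ?_)
  · rintro ⟨a, t⟩ ⟨x, hx, hcrit, ht⟩
    refine ⟨φ x, mem_image_of_mem φ hx, mfderiv_comp_chartAt_symm_eq_zero (hWx₀ hx)
      ((hg.add_sum_apply hΨ a).mdifferentiableAt (by norm_num)) hcrit, ?_⟩
    simpa [φ.left_inv (hWx₀ hx)] using ht
  · have hZk : ∀ k, ContDiffOn ℝ 2 (fun q : (ι → StrongDual ℝ E) × E => Ψ (φ.symm q.2) k)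
        (univ ×ˢ (φ '' W)) := fun k =>
      ((ContinuousLinearMap.proj k).contDiff.comp_contDiffOn hZ).comp contDiff_snd.contDiffOn
        fun q hq => hq.2
    exact (hG.comp contDiff_snd.contDiffOn fun q hq => hq.2).add (ContDiffOn.sum fun k _ =>
      ((contDiff_apply ℝ (StrongDual ℝ E) k).comp contDiff_fst).contDiffOn.clm_apply (hZk k))
  · intro a ℓ y hy
    have hsingle : ∑ k, (Pi.single j ℓ : ι → StrongDual ℝ E) k (Ψ (φ.symm y) k) = ℓ y := by
      rw [Finset.sum_eq_single j (fun k _ hk => by simp [hk]) (by simp), Pi.single_eq_same,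
        hΨj _ (hφW y hy).1, (hφW y hy).2]
    simp [f, Finset.sum_add_distrib, hsingle, add_assoc]

variable [FiniteDimensional ℝ E] [T2Space M] [IsManifold 𝓘(ℝ, E) ∞ M]

theorem exists_finset_contMDiff_apply_eq_chartAt {T O : Set M} (hT : IsCompact T)
    (hO : IsOpen O) (hTO : T ⊆ O) :
    ∃ (s : Finset M) (Ψ : M → s → E) (W : M → Set M), ContMDiff 𝓘(ℝ, E) 𝓘(ℝ, s → E) ∞ Ψ ∧
      HasCompactSupport Ψ ∧ support Ψ ⊆ O ∧ T ⊆ ⋃ i ∈ s, W i ∧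
      ∀ i : s, IsOpen (W i) ∧ W i ⊆ (chartAt E (i : M)).source ∧
        ∀ x ∈ W i, Ψ x i = chartAt E (i : M) x := by
  have hbump : ∀ x ∈ O, ∃ φ : M → ℝ, ContMDiff 𝓘(ℝ, E) 𝓘(ℝ) ∞ φ ∧ HasCompactSupport φ ∧
      tsupport φ ⊆ (chartAt E x).source ∩ O ∧ φ =ᶠ[𝓝 x] 1 := by
    intro x hx
    obtain ⟨b, -, hb⟩ := (SmoothBumpFunction.nhds_basis_tsupport (I := 𝓘(ℝ, E)) x).mem_iff.1
      (inter_mem (chart_source_mem_nhds E x) (hO.mem_nhds hx))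
    exact ⟨b, b.contMDiff, b.hasCompactSupport, hb, b.eventuallyEq_one⟩
  choose! φ hφ hφc hφO hφ1 using hbump
  obtain ⟨s, hsT, hTs⟩ := hT.elim_nhds_subcover (fun x => interior {y | φ x y = 1})
    fun x hx => interior_mem_nhds.2 (hφ1 x (hTO hx))
  have hsO : ∀ i ∈ s, i ∈ O := fun i hi => hTO (hsT i hi)
  refine ⟨s, fun x i => φ i x • chartAt E (i : M) x, fun i => interior {y | φ i y = 1},
    contMDiff_pi_space.2 fun i => contMDiff_of_tsupport fun x hx => ?_, ?_, ?_, hTs,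
    fun i => ⟨isOpen_interior, fun x hx => ?_, fun x hx => ?_⟩⟩
  · have hx' := (hφO i (hsO i i.2) (tsupport_smul_subset_left _ _ hx)).1
    exact (hφ i (hsO i i.2)).contMDiffAt.smul
      (contMDiffOn_chart.contMDiffAt ((chartAt E (i : M)).open_source.mem_nhds hx'))
  · refine HasCompactSupport.intro (s.isCompact_biUnion fun i hi => hφc i (hsO i hi))
      fun x hx => ?_
    simp only [mem_iUnion, not_exists] at hx
    exact funext fun i => by simp [image_eq_zero_of_notMem_tsupport (hx i i.2)]
  · intro x hx
    obtain ⟨i, hi⟩ : ∃ i : s, φ i x • chartAt E (i : M) x ≠ 0 := by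
      by_contra! h
      exact hx (funext h)
    exact (hφO i (hsO i i.2) (subset_tsupport _ (left_ne_zero_of_smul hi))).2
  · have h1 : φ i x = 1 := interior_subset (s := {y | φ i y = 1}) hx
    exact (hφO i (hsO i i.2) (subset_tsupport _ (by simp [h1]))).1
  · have h1 : φ i x = 1 := interior_subset (s := {y | φ i y = 1}) hx
    simp [h1]

theorem exists_contMDiff_hasCompactSupport_eqOn_zero_one [SigmaCompactSpace M] {A B : Set M}
    (hA : IsClosed A) (hB : IsCompact B) (hAB : Disjoint A B) :
    ∃ g : M → ℝ, ContMDiff 𝓘(ℝ, E) 𝓘(ℝ) ∞ g ∧ HasCompactSupport g ∧ EqOn g 0 A ∧ EqOn g 1 B := by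
  have : LocallyCompactSpace M := ChartedSpace.locallyCompactSpace E M
  obtain ⟨K, hK, hBK, hKA⟩ := exists_compact_between hB hA.isOpen_compl hAB.subset_compl_left
  obtain ⟨g, hg, -, hgK, hgB⟩ := exists_contMDiff_support_eq_eq_one_iff 𝓘(ℝ, E)
    (n := (⊤ : ℕ∞)) isOpen_interior hB.isClosed hBK
  have hg0 : ∀ x ∉ interior K, g x = 0 := fun x hx => notMem_support.1 (hgK ▸ hx)
  exact ⟨g, hg, HasCompactSupport.intro hK fun x hx => hg0 x (mt (interior_subset ·) hx),
    fun x hx => hg0 x fun h => hKA (interior_subset h) hx, fun x hx => (hgB x).1 hx⟩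

theorem exists_contMDiff_eq_of_notMem_Ioo_isRegularValue {g : M → ℝ}
    (hg : ContMDiff 𝓘(ℝ, E) 𝓘(ℝ) ∞ g) (hgc : HasCompactSupport g) :
    ∃ f : M → ℝ, ContMDiff 𝓘(ℝ, E) 𝓘(ℝ) ∞ f ∧ (∀ x, g x ∉ Ioo 0 1 → f x = g x) ∧
      ∃ t ∈ Ioo (0 : ℝ) 1, IsRegularValue 𝓘(ℝ, E) f t := by
  classical
  set T := g ⁻¹' Icc (1 / 4 : ℝ) (3 / 4)
  have hT : IsCompact T := hgc.isCompact.of_isClosed_subset (isClosed_Icc.preimage hg.continuous)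
    fun x hx => subset_tsupport _ fun h => by linarith [show (1 / 4 : ℝ) ≤ g x from hx.1]
  obtain ⟨s, Ψ, W, hΨ, hΨc, hΨO, hTW, hW⟩ := exists_finset_contMDiff_apply_eq_chartAt (E := E) hT
    (isOpen_Ioo.preimage hg.continuous) fun x hx =>
      ⟨(by norm_num : (0 : ℝ) < 1 / 4).trans_le hx.1, hx.2.trans_lt (by norm_num : (3 / 4 : ℝ) < 1)⟩
  obtain ⟨C, hC⟩ := hΨc.exists_bound_of_continuous hΨ.continuous
  set f : (s → StrongDual ℝ E) → M → ℝ := fun a x => g x + ∑ k, a k (Ψ x k)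
  set Bad := ⋃ i ∈ s, criticalValuePairs 𝓘(ℝ, E) f (W i)
  have hBad : dimH Bad ≤ finrank ℝ (s → StrongDual ℝ E) :=
    (dimH_bUnion s.countable_toSet _).le.trans <| iSup₂_le fun i hi =>
      dimH_criticalValuePairs_le_of_apply_eq_chartAt (hg.of_le (by norm_cast))
        (hΨ.of_le (by norm_cast)) (hW ⟨i, hi⟩).1 (hW ⟨i, hi⟩).2.1 (hW ⟨i, hi⟩).2.2
  -- For `a` in the first factor the perturbation is below `1 / 8`, so `f a x ∈ (3/8, 5/8)`
  -- forces `x ∈ T`, where the charts `W i` see every critical point.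
  set Box : Set ((s → StrongDual ℝ E) × ℝ) :=
    {a | Fintype.card s * (‖a‖ * C) < 1 / 8} ×ˢ Ioo (3 / 8) (5 / 8)
  have hBox : IsOpen Box := (isOpen_lt (by fun_prop) continuous_const).prod isOpen_Ioo
  obtain ⟨⟨a, t⟩, ⟨ha, ht⟩, hgood⟩ := (dense_compl_of_dimH_lt_finrank (hBad.trans_lt (by
    rw [Module.finrank_prod, finrank_self]; exact_mod_cast Nat.lt_succ_self _))).inter_open_nonempty
      Box hBox ⟨(0, 1 / 2), by norm_num [Box]⟩
  have hsmall : ∀ x, |∑ k, a k (Ψ x k)| < 1 / 8 := fun x =>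
    (abs_sum_apply_le a (Ψ x)).trans_lt (lt_of_le_of_lt (by gcongr; exact hC x) ha)
  refine ⟨f a, hg.add_sum_apply hΨ a, fun x hx => ?_, t, ⟨by linarith [ht.1], by linarith [ht.2]⟩,
    fun x hx hcrit => hgood ?_⟩
  · simp [f, notMem_support.1 fun h => hx (hΨO h)]
  · have hxT : x ∈ T := by
      obtain ⟨h₁, h₂⟩ := abs_lt.1 (hsmall x)
      have hgx : g x = t - ∑ k, a k (Ψ x k) := eq_sub_of_add_eq hx
      exact ⟨by linarith [ht.1], by linarith [ht.2]⟩
    obtain ⟨i, hi, hxW⟩ := mem_iUnion₂.1 (hTW hxT)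
    exact mem_iUnion₂.2 ⟨i, hi, x, hxW, hcrit, hx⟩

end Manifold

theorem exists_smooth_function_with_regular_value_general
    (n : ℕ) (M : Type*) [TopologicalSpace M] [T2Space M] [SigmaCompactSpace M]
    [ChartedSpace (EuclideanSpace ℝ (Fin n)) M]
    [IsManifold (𝓡 n) (⊤ : ℕ∞) M]
    (A B : Set M) (hA : IsClosed A) (hB : IsCompact B)
    (hAB : A ∩ B = ∅) (c : ℝ) (hc : 0 < c) :
    ∃ f : M → ℝ, ContMDiff (𝓡 n) 𝓘(ℝ) (⊤ : ℕ∞) f ∧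
      (∀ x ∈ A, f x = 0) ∧ (∀ x ∈ B, c < f x) ∧
      (∀ x : M, f x = c → mfderiv (𝓡 n) 𝓘(ℝ) f x ≠ 0) := by
  obtain ⟨g, hg, hgc, hgA, hgB⟩ := exists_contMDiff_hasCompactSupport_eqOn_zero_one
    (E := EuclideanSpace ℝ (Fin n)) hA hB (disjoint_iff_inter_eq_empty.2 hAB)
  obtain ⟨F, hF, hFg, t, ht, hreg⟩ := exists_contMDiff_eq_of_notMem_Ioo_isRegularValue hg hgc
  have hFA : EqOn F 0 A := fun x hx => (hFg x (by simp [hgA hx])).trans (hgA hx)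
  have hFB : EqOn F 1 B := fun x hx => (hFg x (by simp [hgB hx])).trans (hgB hx)
  refine ⟨fun x => c / t * F x, contMDiff_const.mul hF, fun x hx => by simp [hFA hx],
    fun x hx => ?_, ?_⟩
  · show c < c / t * F x
    rw [hFB hx, Pi.one_apply, mul_one, lt_div_iff₀ ht.1]
    exact mul_lt_of_lt_one_right hc ht.2
  · have := hreg.const_mul (div_ne_zero hc.ne' ht.1.ne')
    rwa [div_mul_cancel₀ c ht.1.ne'] at this

theorem exists_smooth_function_with_regular_value
    (n : ℕ) (M : Type*) [TopologicalSpace M] [T2Space M] [SigmaCompactSpace M]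
    [ChartedSpace (EuclideanSpace ℝ (Fin n)) M]
    [IsManifold (𝓡 n) (⊤ : ℕ∞) M]
    (A B : Set M) (hA : IsClosed A) (hB : IsCompact B) (hBne : B.Nonempty)
    (hAB : A ∩ B = ∅) (c : ℝ) (hc : 0 < c) :
    ∃ f : M → ℝ, ContMDiff (𝓡 n) 𝓘(ℝ) (⊤ : ℕ∞) f ∧
      (∀ x ∈ A, f x = 0) ∧ (∀ x ∈ B, c < f x) ∧
      (∀ x : M, f x = c → mfderiv (𝓡 n) 𝓘(ℝ) f x ≠ 0) :=
  exists_smooth_function_with_regular_value_general n M A B hA hB hAB c hc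
end
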